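/- arXiv:1605.07425 — 4 statements merged into one kernel-verified Lean document; each statement's English description precedes it below -/
import Mathlib

section
/- Let Q be a symmetric positive definite n×n real matrix, A₀ an n×n real matrix with Q·A₀ + A₀'·Q ≤ −I, and q₂ > 0 with Q ≤ q₂·I. Define F(δ) = (I + δ·K₀C)·exp(A·δ) where A₀ = A + K₀C. Then there exists δ* > 0 such that for all δ ∈ [0, δ*), F(δ)'·Q·F(δ) ≤ (1 − δ/(2q₂))·Q. -/
/-!
Put `G δ = (F δ)ᵀ * Q * F δ`. Since `F 0 = 1` and `F' 0 = K₀ C + A = A₀`, the derivative of `G`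
at `0` is `S = Q A₀ + A₀ᵀ Q`, so `G δ = Q + δ S + o(δ)`. Hence
`(1 - δ/(2q₂)) Q - G δ = δ/(2q₂) (q₂ I - Q) + δ (-I - S) + (Q + δ S + (δ/2) I - G δ)`:
the first two terms are positive semidefinite by hypothesis, and the last one is as soon as the
`o(δ)` remainder has operator norm at most `δ/2`.
-/
open Matrix
open scoped Matrix.Norms.L2Operator

theorem Matrix.IsHermitian.transpose_mul_mul {n : Type*} [Fintype n] {Q : Matrix n n ℝ}
    (hQ : Q.IsHermitian) (F : Matrix n n ℝ) : (Fᵀ * Q * F).IsHermitian := by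
  simpa only [conjTranspose_eq_transpose_of_trivial] using isHermitian_conjTranspose_mul_mul F hQ

namespace Matrix

variable {n : Type*} [Fintype n] [DecidableEq n]

theorem dotProduct_mulVec_le_l2_opNorm_mul (E : Matrix n n ℝ) (x : n → ℝ) :
    x ⬝ᵥ (E *ᵥ x) ≤ ‖E‖ * (x ⬝ᵥ x) := by
  set v : EuclideanSpace ℝ n := WithLp.toLp 2 x
  have hv : x ⬝ᵥ x = ‖v‖ ^ 2 := by
    rw [← real_inner_self_eq_norm_sq, EuclideanSpace.inner_eq_star_dotProduct]; simp [v]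
  calc x ⬝ᵥ (E *ᵥ x) = inner ℝ v ((EuclideanSpace.equiv n ℝ).symm (E *ᵥ v)) := by
        rw [EuclideanSpace.inner_eq_star_dotProduct]; simp [v, dotProduct_comm]
    _ ≤ ‖v‖ * (‖E‖ * ‖v‖) :=
        (real_inner_le_norm _ _).trans (by gcongr; exact E.l2_opNorm_mulVec v)
    _ = ‖E‖ * (x ⬝ᵥ x) := by rw [hv]; ring

theorem posSemidef_smul_one_sub_of_l2_opNorm_le {E : Matrix n n ℝ} (hE : E.IsHermitian) {c : ℝ}
    (hc : ‖E‖ ≤ c) : (c • 1 - E).PosSemidef := by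
  refine posSemidef_iff_dotProduct_mulVec.mpr
    ⟨(isHermitian_one.smul (IsSelfAdjoint.all c)).sub hE, fun x => ?_⟩
  have hEx := E.dotProduct_mulVec_le_l2_opNorm_mul x
  have hx : 0 ≤ x ⬝ᵥ x := by simpa using dotProduct_self_star_nonneg x
  simp only [sub_mulVec, smul_mulVec, one_mulVec, dotProduct_sub, dotProduct_smul, star_trivial,
    smul_eq_mul]
  nlinarith

theorem _root_.HasDerivAt.matrix_transpose {F : ℝ → Matrix n n ℝ} {F' : Matrix n n ℝ} {t : ℝ}
    (hF : HasDerivAt F F' t) : HasDerivAt (fun s => (F s)ᵀ) F'ᵀ t := by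
  simpa only [star_eq_conjTranspose, conjTranspose_eq_transpose_of_trivial] using hF.star

theorem _root_.HasDerivAt.matrix_transpose_mul_mul {F : ℝ → Matrix n n ℝ} {F' : Matrix n n ℝ}
    {t : ℝ} (hF : HasDerivAt F F' t) (Q : Matrix n n ℝ) :
    HasDerivAt (fun s => (F s)ᵀ * Q * F s) (F'ᵀ * Q * F t + (F t)ᵀ * Q * F') t :=
  (hF.matrix_transpose.mul_const Q).mul hF

theorem exists_pos_posSemidef_taylor_of_hasDerivAt {G : ℝ → Matrix n n ℝ} {S : Matrix n n ℝ}
    (hG : HasDerivAt G S 0) (hGh : ∀ δ, (G δ).IsHermitian) (hS : S.IsHermitian) {c : ℝ}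
    (hc : 0 < c) : ∃ ε > 0, ∀ δ, 0 ≤ δ → δ < ε → (G 0 + δ • S + (c * δ) • 1 - G δ).PosSemidef := by
  obtain ⟨ε, hε, hsmall⟩ :=
    Metric.eventually_nhds_iff.mp ((hasDerivAt_iff_isLittleO_nhds_zero.mp hG).def hc)
  refine ⟨ε, hε, fun δ hδ hδε => ?_⟩
  have hnorm : ‖G δ - G 0 - δ • S‖ ≤ c * δ := by
    have hδdist : dist δ 0 < ε := by simpa [abs_of_nonneg hδ] using hδε
    simpa [abs_of_nonneg hδ] using hsmall hδdist
  have hherm : (G δ - G 0 - δ • S).IsHermitian :=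
    ((hGh δ).sub (hGh 0)).sub (hS.smul (IsSelfAdjoint.all δ))
  convert posSemidef_smul_one_sub_of_l2_opNorm_le hherm hnorm using 1
  abel

end Matrix

theorem hasDerivAt_one_add_smul_mul_exp_smul {𝔸 : Type*} [NormedRing 𝔸] [NormedAlgebra ℝ 𝔸]
    [CompleteSpace 𝔸] (M A : 𝔸) :
    HasDerivAt (fun δ : ℝ => (1 + δ • M) * NormedSpace.exp (δ • A)) (M + A) 0 := by
  have hexp : HasDerivAt (fun δ : ℝ => NormedSpace.exp (δ • A)) A 0 := by
    simpa using hasDerivAt_exp_smul_const A (0 : ℝ)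
  have hlin : HasDerivAt (fun δ : ℝ => 1 + δ • M) M 0 := by
    simpa using ((hasDerivAt_id (0 : ℝ)).smul_const M).const_add 1
  simpa using! hlin.mul hexp

/-- If `Q` is symmetric positive definite with `Q A₀ + A₀ᵀ Q ≤ −I` and `Q ≤ q₂ I`, where
`A₀ = A + K₀ C`, then for `F(δ) = (I + δ K₀ C) exp(Aδ)` there is `δ* > 0` such that
`F(δ)ᵀ Q F(δ) ≤ (1 − δ/(2q₂)) Q` for all `δ ∈ [0, δ*)` (Loewner order). -/
theorem stmt_2 (n : ℕ) (A A₀ : Matrix (Fin n) (Fin n) ℝ)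
    (K₀ : Matrix (Fin n) (Fin 1) ℝ) (C : Matrix (Fin 1) (Fin n) ℝ)
    (hA₀ : A₀ = A + K₀ * C)
    (Q : Matrix (Fin n) (Fin n) ℝ) (hQ : Q.PosDef)
    (hLyap : ((-1 : Matrix (Fin n) (Fin n) ℝ) - (Q * A₀ + A₀ᵀ * Q)).PosSemidef)
    (q₂ : ℝ) (hq₂ : 0 < q₂) (hQle : ((q₂ : ℝ) • (1 : Matrix (Fin n) (Fin n) ℝ) - Q).PosSemidef)
    (F : ℝ → Matrix (Fin n) (Fin n) ℝ)
    (hF : ∀ δ : ℝ, F δ = ((1 : Matrix (Fin n) (Fin n) ℝ) + δ • (K₀ * C))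
        * NormedSpace.exp (δ • A)) :
    ∃ δstar > (0 : ℝ), ∀ δ : ℝ, 0 ≤ δ → δ < δstar →
      ((1 - δ / (2 * q₂)) • Q - (F δ)ᵀ * Q * F δ).PosSemidef := by
  set S := Q * A₀ + A₀ᵀ * Q
  have hF0 : F 0 = 1 := by simp [hF]
  have hFderiv : HasDerivAt F A₀ 0 := by
    rw [funext hF, hA₀, add_comm A]
    exact hasDerivAt_one_add_smul_mul_exp_smul _ _
  have hG : HasDerivAt (fun δ => (F δ)ᵀ * Q * F δ) S 0 := by
    simpa [hF0, S, add_comm] using hFderiv.matrix_transpose_mul_mul Q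
  have hS : S.IsHermitian := by simpa using (isHermitian_one.neg.sub hLyap.isHermitian).neg
  obtain ⟨ε, hε, hsmall⟩ := exists_pos_posSemidef_taylor_of_hasDerivAt hG
    (fun δ => hQ.isHermitian.transpose_mul_mul (F δ)) hS (c := 1 / 2) (by norm_num)
  refine ⟨ε, hε, fun δ hδ hδε => ?_⟩
  have hsplit : (1 - δ / (2 * q₂)) • Q - (F δ)ᵀ * Q * F δ =
      (δ / (2 * q₂)) • (q₂ • 1 - Q) + δ • (-1 - S)
        + (Q + δ • S + (1 / 2 * δ) • 1 - (F δ)ᵀ * Q * F δ) := by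
    match_scalars <;> field_simp <;> ring
  rw [hsplit]
  have hrem : (Q + δ • S + (1 / 2 * δ) • 1 - (F δ)ᵀ * Q * F δ).PosSemidef := by
    simpa [hF0] using hsmall δ hδ hδε
  exact ((hQle.smul (by positivity)).add (hLyap.smul hδ)).add hrem
end

section
/- Suppose there exist row vector K_c and column vector K_o in ℝⁿ such that A + B·K_c and A + K_o·C are Hurwitz. Consider the discrete-time system (x̂_{k+1}, e_{k+1}) = M(δ)·(x̂_k, e_k) where M(δ) is the block upper-triangular matrix with diagonal blocks F_c(δ) = exp(Aδ) + ∫₀^δ exp(A(δ−s)) B K_c ds and F_o(δ) = (I + δ K_o C) exp(Aδ), and off-diagonal block δ K_o C exp(Aδ). Then there exists δ* > 0 such that for all δ ∈ (0, δ*), the spectral radius of M(δ) is strictly less than 1 (equivalently, the origin is globally asymptotically stable for the discrete system). -/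
/-!
For small `δ > 0` both diagonal blocks are first-order perturbations of the identity,
`F(δ) = 1 + δ • G(δ)` with `G(δ) → F'(0)`, where `F_c'(0) = A + B K_c` and `F_o'(0) = A + K_o C`
are Hurwitz. An eigenvalue `1 + δ z` of `1 + δ • G(δ)` lies in the open unit disc iff `z` lies in
the disc of radius `1/δ` centred at `-1/δ` (the stability region of the explicit Euler method).
These discs grow as `δ` decreases and exhaust the open left half-plane, so by compactness one of
them contains the spectrum of `F'(0)`, and by upper hemicontinuity of the spectrum it then contains
the spectrum of `G(δ)` for all small `δ`. The spectrum of the block-triangular `M(δ)` lies in the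
union of the spectra of its diagonal blocks.
-/

open Matrix Filter Set Topology NormedSpace Pointwise

attribute [local instance] Matrix.linftyOpNormedAddCommGroup Matrix.linftyOpNormedSpace
  Matrix.linftyOpNormedRing Matrix.linftyOpNormedAlgebra

def eulerStabilityRegion (δ : ℝ) : Set ℂ := {z | ‖1 + δ * z‖ < 1}

lemma isOpen_eulerStabilityRegion (δ : ℝ) : IsOpen (eulerStabilityRegion δ) :=
  isOpen_lt (by fun_prop) continuous_const

lemma mem_eulerStabilityRegion_iff {δ : ℝ} (hδ : 0 < δ) {z : ℂ} :
    z ∈ eulerStabilityRegion δ ↔ 2 * z.re + δ * Complex.normSq z < 0 := by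
  have hnormSq : Complex.normSq (1 + δ * z) = 1 + δ * (2 * z.re + δ * Complex.normSq z) := by
    simp only [Complex.normSq_apply, Complex.add_re, Complex.one_re, Complex.mul_re,
      Complex.ofReal_re, Complex.ofReal_im, Complex.add_im, Complex.one_im, Complex.mul_im]
    ring
  show ‖_‖ < 1 ↔ _
  rw [← sq_lt_one_iff₀ (norm_nonneg _), ← Complex.normSq_eq_norm_sq, hnormSq,
    add_lt_iff_neg_left]
  exact ⟨fun h => neg_of_mul_neg_right h hδ.le, mul_neg_of_pos_of_neg hδ⟩

lemma eulerStabilityRegion_subset {δ δ' : ℝ} (hδ : 0 < δ) (hδδ' : δ ≤ δ') :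
    eulerStabilityRegion δ' ⊆ eulerStabilityRegion δ := by
  intro z hz
  rw [mem_eulerStabilityRegion_iff (hδ.trans_le hδδ')] at hz
  rw [mem_eulerStabilityRegion_iff hδ]
  nlinarith [Complex.normSq_nonneg z]

lemma exists_mem_eulerStabilityRegion {z : ℂ} (hz : z.re < 0) :
    ∃ δ > 0, z ∈ eulerStabilityRegion δ := by
  have hz0 : 0 < Complex.normSq z := Complex.normSq_pos.mpr (by rintro rfl; simp at hz)
  have hδ : 0 < -z.re / Complex.normSq z := div_pos (neg_pos.mpr hz) hz0
  refine ⟨_, hδ, (mem_eulerStabilityRegion_iff hδ).mpr ?_⟩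
  rw [div_mul_cancel₀ _ hz0.ne']
  linarith

lemma IsCompact.exists_subset_eulerStabilityRegion {K : Set ℂ} (hK : IsCompact K)
    (hre : ∀ z ∈ K, z.re < 0) : ∃ δ > 0, K ⊆ eulerStabilityRegion δ := by
  obtain ⟨⟨δ, hδ⟩, hKδ⟩ := hK.elim_directed_cover (ι := {δ : ℝ // 0 < δ})
    (fun δ => eulerStabilityRegion δ) (fun δ => isOpen_eulerStabilityRegion δ)
    (fun z hz => by
      obtain ⟨δ, hδ, hzδ⟩ := exists_mem_eulerStabilityRegion (hre z hz)
      exact mem_iUnion.mpr ⟨⟨δ, hδ⟩, hzδ⟩)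
    (fun δ δ' => ⟨⟨min δ δ', lt_min δ.2 δ'.2⟩,
      eulerStabilityRegion_subset (lt_min δ.2 δ'.2) (min_le_left _ _),
      eulerStabilityRegion_subset (lt_min δ.2 δ'.2) (min_le_right _ _)⟩)
  exact ⟨δ, hδ, hKδ⟩

lemma spectrum.one_add_smul {𝕜 A : Type*} [Field 𝕜] [Ring A] [Algebra 𝕜 A] (a : A) {c : 𝕜}
    (hc : c ≠ 0) : spectrum 𝕜 (1 + c • a) = {1} + c • spectrum 𝕜 a := by
  have h := spectrum.unit_smul_eq_smul a (Units.mk0 c hc)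
  rw [Units.smul_mk0, Units.smul_mk0] at h
  rw [← h, ← map_one (algebraMap 𝕜 A), spectrum.singleton_add_eq]

theorem eventually_spectrum_one_add_smul_subset_ball {E : Type*} [NormedRing E]
    [NormedAlgebra ℂ E] [CompleteSpace E] {a : E} (ha : ∀ μ ∈ spectrum ℂ a, μ.re < 0)
    {G : ℝ → E} (hG : Tendsto G (𝓝[>] 0) (𝓝 a)) :
    ∀ᶠ δ : ℝ in 𝓝[>] 0, spectrum ℂ (1 + (δ : ℂ) • G δ) ⊆ Metric.ball 0 1 := by
  obtain ⟨δ₀, hδ₀, ha₀⟩ := (spectrum.isCompact a).exists_subset_eulerStabilityRegion ha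
  have hG₀ : ∀ᶠ δ in 𝓝[>] 0, spectrum ℂ (G δ) ⊆ eulerStabilityRegion δ₀ :=
    hG.eventually <| (upperHemicontinuous_spectrum ℂ E).forall_isOpen a _
      (isOpen_eulerStabilityRegion δ₀) ha₀
  filter_upwards [hG₀, Ioo_mem_nhdsGT hδ₀] with δ hδG hδ
  rw [spectrum.one_add_smul _ (Complex.ofReal_ne_zero.mpr hδ.1.ne')]
  rintro _ ⟨_, rfl, _, ⟨z, hz, rfl⟩, rfl⟩
  simpa [eulerStabilityRegion] using eulerStabilityRegion_subset hδ.1 hδ.2.le (hδG hz)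

theorem Matrix.eventually_spectrum_map_subset_ball_of_hasDerivAt {N : Type*} [Fintype N]
    [DecidableEq N] {F : ℝ → Matrix N N ℝ} {F' : Matrix N N ℝ} (hF : HasDerivAt F F' 0)
    (hF₀ : F 0 = 1) (hF' : ∀ μ ∈ spectrum ℂ (F'.map (algebraMap ℝ ℂ)), μ.re < 0) :
    ∀ᶠ δ : ℝ in 𝓝[>] 0, spectrum ℂ ((F δ).map (algebraMap ℝ ℂ)) ⊆ Metric.ball 0 1 := by
  have hslope : Tendsto (fun δ => (slope F 0 δ).map (algebraMap ℝ ℂ)) (𝓝[>] 0)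
      (𝓝 (F'.map (algebraMap ℝ ℂ))) :=
    ((continuous_id.matrix_map (continuous_algebraMap ℝ ℂ)).tendsto F').comp
      (hasDerivAt_iff_tendsto_slope.mp hF |>.mono_left (nhdsWithin_mono 0 fun _ h => ne_of_gt h))
  filter_upwards [eventually_spectrum_one_add_smul_subset_ball hF' hslope] with δ hδ
  have hmap : (F δ).map (algebraMap ℝ ℂ) = 1 + (δ : ℂ) • (slope F 0 δ).map (algebraMap ℝ ℂ) := by
    rw [← sub_smul_slope_vadd F 0 δ, hF₀, vadd_eq_add, sub_zero, add_comm,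
      Matrix.map_add _ (map_add _), Matrix.map_one _ (map_zero _) (map_one _)]
    ext i j
    simp [Complex.real_smul]
  rw [hmap]
  exact hδ

theorem Matrix.spectrum_fromBlocks_zero₂₁_subset {R m n : Type*} [CommRing R] [Fintype m]
    [Fintype n] [DecidableEq m] [DecidableEq n] (a : Matrix m m R) (b : Matrix m n R)
    (d : Matrix n n R) :
    spectrum R (fromBlocks a b 0 d) ⊆ spectrum R a ∪ spectrum R d := by
  intro μ hμ
  by_contra h
  simp only [mem_union, not_or, spectrum.notMem_iff] at h
  rw [spectrum.mem_iff] at hμ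
  apply hμ
  have hblocks : algebraMap R _ μ - fromBlocks a b 0 d
      = fromBlocks (algebraMap R _ μ - a) (-b) 0 (algebraMap R _ μ - d) := by
    ext (i | i) (j | j) <;> simp [algebraMap_matrix_apply]
  rw [hblocks, isUnit_iff_isUnit_det, det_fromBlocks_zero₂₁]
  exact (isUnit_iff_isUnit_det _ |>.mp h.1).mul (isUnit_iff_isUnit_det _ |>.mp h.2)

theorem hasDerivAt_integral_exp_sub_smul_mul {𝔸 : Type*} [NormedRing 𝔸] [NormedAlgebra ℝ 𝔸]
    [CompleteSpace 𝔸] (A P : 𝔸) (t : ℝ) :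
    HasDerivAt (fun δ : ℝ => ∫ s in (0 : ℝ)..δ, exp ((δ - s) • A) * P) (exp (t • A) * P) t := by
  have hcont : Continuous fun u : ℝ => exp (u • A) * P :=
    continuous_iff_continuousAt.mpr fun u =>
      (hasDerivAt_exp_smul_const A u).continuousAt.mul continuousAt_const
  refine (hcont.integral_hasStrictDerivAt 0 t).hasDerivAt.congr_of_eventuallyEq
    (Eventually.of_forall fun δ => ?_)
  simpa using intervalIntegral.integral_comp_sub_left (fun u : ℝ => exp (u • A) * P) δ
    (a := 0) (b := δ)

/-- If `A + B Kc` and `A + Ko C` are Hurwitz, then the block matrix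
`M(δ) = [[F_c(δ), δ Ko C exp(Aδ)], [0, F_o(δ)]]`, with
`F_c(δ) = exp(Aδ) + ∫₀^δ exp(A(δ−s)) B Kc ds` and `F_o(δ) = (I + δ Ko C) exp(Aδ)`,
has spectral radius strictly less than `1` for all sufficiently small `δ > 0`. -/
theorem stmt_4 (n : ℕ) (A : Matrix (Fin n) (Fin n) ℝ)
    (B : Matrix (Fin n) (Fin 1) ℝ) (C : Matrix (Fin 1) (Fin n) ℝ)
    (Kc : Matrix (Fin 1) (Fin n) ℝ) (Ko : Matrix (Fin n) (Fin 1) ℝ)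
    (hc : ∀ μ ∈ spectrum ℂ ((A + B * Kc).map (algebraMap ℝ ℂ)), μ.re < 0)
    (ho : ∀ μ ∈ spectrum ℂ ((A + Ko * C).map (algebraMap ℝ ℂ)), μ.re < 0)
    (Fc Fo : ℝ → Matrix (Fin n) (Fin n) ℝ)
    (hFc : ∀ δ : ℝ, Fc δ = NormedSpace.exp (δ • A)
        + ∫ s in (0 : ℝ)..δ, NormedSpace.exp ((δ - s) • A) * (B * Kc))
    (hFo : ∀ δ : ℝ, Fo δ = ((1 : Matrix (Fin n) (Fin n) ℝ) + δ • (Ko * C))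
        * NormedSpace.exp (δ • A))
    (M : ℝ → Matrix (Fin n ⊕ Fin n) (Fin n ⊕ Fin n) ℝ)
    (hM : ∀ δ : ℝ, M δ = Matrix.fromBlocks (Fc δ) (δ • (Ko * C * NormedSpace.exp (δ • A)))
        0 (Fo δ)) :
    ∃ δstar > (0 : ℝ), ∀ δ : ℝ, 0 < δ → δ < δstar →
      ∀ μ ∈ spectrum ℂ ((M δ).map (algebraMap ℝ ℂ)), ‖μ‖ < 1 := by
  have hFc' : HasDerivAt Fc (A + B * Kc) 0 := by
    have h := (hasDerivAt_exp_smul_const A (0 : ℝ)).fun_add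
      (hasDerivAt_integral_exp_sub_smul_mul A (B * Kc) 0)
    rw [zero_smul, exp_zero, one_mul, one_mul] at h
    rw [funext hFc]
    exact h
  have hFo' : HasDerivAt Fo (A + Ko * C) 0 := by
    have h := ((hasDerivAt_id' (0 : ℝ)).smul_const (Ko * C)).const_add 1 |>.fun_mul
      (hasDerivAt_exp_smul_const A (0 : ℝ))
    rw [zero_smul, zero_smul, add_zero, exp_zero, one_smul, one_mul, one_mul, mul_one,
      add_comm] at h
    rw [funext hFo]
    exact h
  have hsmall := (eventually_spectrum_map_subset_ball_of_hasDerivAt hFc' (by simp [hFc]) hc).and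
    (eventually_spectrum_map_subset_ball_of_hasDerivAt hFo' (by simp [hFo]) ho)
  obtain ⟨δstar, hδstar, hsub⟩ := mem_nhdsGT_iff_exists_Ioo_subset.mp hsmall
  refine ⟨δstar, hδstar, fun δ hδ₀ hδ μ hμ => ?_⟩
  rw [hM, fromBlocks_map, Matrix.map_zero _ (map_zero _)] at hμ
  obtain ⟨hcδ, hoδ⟩ := hsub ⟨hδ₀, hδ⟩
  exact mem_ball_zero_iff.mp <|
    (spectrum_fromBlocks_zero₂₁_subset _ _ _ hμ).elim (fun h => hcδ h) (fun h => hoδ h)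
end

section
/- Let P, Q be symmetric positive definite n×n matrices, μ > 0, and V(e, x̂) = x̂'P x̂ + μ e'Q e. Suppose there exist p₁, p₂, q₁, q₂ > 0 with p₁I ≤ P ≤ p₂I, q₁I ≤ Q ≤ q₂I, and δ > 0 such that e_{k+1}'Q e_{k+1} ≤ (1 − δ/(2q₂)) e_k'Q e_k and x̂_k' F_c(δ)' P F_c(δ) x̂_k ≤ (1 − δ/(2p₂)) x̂_k' P x̂_k for the update x̂_{k+1} = F_c(δ) x̂_k + F_{oc}(δ) e_k, e_{k+1} = F_o(δ) e_k. Then for μ ≥ 2 q₂ N(δ)/(δ q₁), where N(δ) = ‖F_{oc}(δ)‖²‖P‖ + ‖F_c(δ)‖²‖F_{oc}(δ)‖²‖P‖²·(4p₂/(δ p₁)), one has V_{k+1} − V_k ≤ −(δ p₁/(4p₂))‖x̂_k‖². -/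
/-!
Write `x̂_{k+1} = F_c x̂_k + F_oc e_k`. The increment of `x̂ᵀ P x̂` is the decrease of the nominal
part `F_c x̂_k`, at least `(δ p₁ / (2 p₂)) ‖x̂_k‖² = 2ε ‖x̂_k‖²`, plus a cross term and a pure
`e_k`-term. Young's inequality with weight `ε` lets the cross term eat only half of the nominal
decrease, at the price of `ε⁻¹ (‖P‖ ‖F_c‖ ‖F_oc‖)² ‖e_k‖²`; this is where `N(δ)` comes from.
The bound on `μ` makes the decrease `μ (δ q₁ / (2 q₂)) ‖e_k‖²` of the observer term pay for
`N(δ) ‖e_k‖²`.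
-/

open Matrix WithLp
open scoped Matrix.Norms.L2Operator

namespace Matrix

variable {ι κ ν : Type*} [Fintype ι] [Fintype κ] [Fintype ν]

lemma dotProduct_self_eq_norm_toLp_sq (v : ι → ℝ) : v ⬝ᵥ v = ‖toLp 2 v‖ ^ 2 := by
  rw [← real_inner_self_eq_norm_sq, EuclideanSpace.inner_toLp_toLp, star_trivial]

lemma dotProduct_mulVec_le_norm_mul_norm [DecidableEq κ] (A : Matrix ι κ ℝ) (x : ι → ℝ)
    (y : κ → ℝ) :
    x ⬝ᵥ A *ᵥ y ≤ ‖A‖ * ‖toLp 2 x‖ * ‖toLp 2 y‖ :=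
  calc x ⬝ᵥ A *ᵥ y = inner ℝ (toLp 2 (A *ᵥ y)) (toLp 2 x) := by
        rw [EuclideanSpace.inner_toLp_toLp, star_trivial]
    _ ≤ ‖toLp 2 (A *ᵥ y)‖ * ‖toLp 2 x‖ := real_inner_le_norm _ _
    _ ≤ ‖A‖ * ‖toLp 2 y‖ * ‖toLp 2 x‖ := by
        gcongr; exact A.l2_opNorm_mulVec (toLp 2 y)
    _ = ‖A‖ * ‖toLp 2 x‖ * ‖toLp 2 y‖ := by ring

lemma add_dotProduct_mulVec_add_le [DecidableEq ι] (A : Matrix ι ι ℝ) (a b : ι → ℝ) :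
    (a + b) ⬝ᵥ A *ᵥ (a + b)
      ≤ a ⬝ᵥ A *ᵥ a + 2 * ‖A‖ * ‖toLp 2 a‖ * ‖toLp 2 b‖ + ‖A‖ * ‖toLp 2 b‖ ^ 2 := by
  have hab := dotProduct_mulVec_le_norm_mul_norm A a b
  have hba := dotProduct_mulVec_le_norm_mul_norm A b a
  have hbb := dotProduct_mulVec_le_norm_mul_norm A b b
  simp only [mulVec_add, dotProduct_add, add_dotProduct]
  linarith

lemma mul_norm_toLp_sq_le_dotProduct_mulVec [DecidableEq ι] {A : Matrix ι ι ℝ} {c : ℝ}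
    (h : (A - c • (1 : Matrix ι ι ℝ)).PosSemidef) (v : ι → ℝ) :
    c * ‖toLp 2 v‖ ^ 2 ≤ v ⬝ᵥ A *ᵥ v := by
  have := h.dotProduct_mulVec_nonneg v
  rw [star_trivial, sub_mulVec, smul_mulVec, one_mulVec, dotProduct_sub, dotProduct_smul,
    smul_eq_mul, dotProduct_self_eq_norm_toLp_sq] at this
  linarith

lemma dotProduct_mulVec_sub_le_of_le_one_sub_mul [DecidableEq ι] {A : Matrix ι ι ℝ} {a c : ℝ}
    (hA : (A - a • (1 : Matrix ι ι ℝ)).PosSemidef) (hc : 0 ≤ c) {v w : ι → ℝ}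
    (h : w ⬝ᵥ A *ᵥ w ≤ (1 - c) * (v ⬝ᵥ A *ᵥ v)) :
    w ⬝ᵥ A *ᵥ w - v ⬝ᵥ A *ᵥ v ≤ -(c * a) * ‖toLp 2 v‖ ^ 2 := by
  have := mul_le_mul_of_nonneg_left (mul_norm_toLp_sq_le_dotProduct_mulVec hA v) hc
  linarith

lemma mulVec_add_mulVec_dotProduct_le [DecidableEq ι] [DecidableEq κ] [DecidableEq ν] {ε : ℝ}
    (hε : 0 < ε) (P : Matrix ι ι ℝ) (F : Matrix ι κ ℝ) (G : Matrix ι ν ℝ) (x : κ → ℝ) (e : ν → ℝ) :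
    (F *ᵥ x + G *ᵥ e) ⬝ᵥ P *ᵥ (F *ᵥ x + G *ᵥ e)
      ≤ (F *ᵥ x) ⬝ᵥ P *ᵥ (F *ᵥ x) + ε * ‖toLp 2 x‖ ^ 2
        + (‖G‖ ^ 2 * ‖P‖ + ‖F‖ ^ 2 * ‖G‖ ^ 2 * ‖P‖ ^ 2 * ε⁻¹) * ‖toLp 2 e‖ ^ 2 := by
  have hFx : ‖toLp 2 (F *ᵥ x)‖ ≤ ‖F‖ * ‖toLp 2 x‖ := F.l2_opNorm_mulVec (toLp 2 x)
  have hGe : ‖toLp 2 (G *ᵥ e)‖ ≤ ‖G‖ * ‖toLp 2 e‖ := G.l2_opNorm_mulVec (toLp 2 e)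
  have young := two_mul_le_add_mul_sq hε (a := ‖toLp 2 x‖) (b := ‖P‖ * ‖F‖ * ‖G‖ * ‖toLp 2 e‖)
  calc _ ≤ (F *ᵥ x) ⬝ᵥ P *ᵥ (F *ᵥ x) + 2 * ‖P‖ * ‖toLp 2 (F *ᵥ x)‖ * ‖toLp 2 (G *ᵥ e)‖
          + ‖P‖ * ‖toLp 2 (G *ᵥ e)‖ ^ 2 := add_dotProduct_mulVec_add_le P _ _
    _ ≤ (F *ᵥ x) ⬝ᵥ P *ᵥ (F *ᵥ x) + 2 * ‖P‖ * (‖F‖ * ‖toLp 2 x‖) * (‖G‖ * ‖toLp 2 e‖)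
          + ‖P‖ * (‖G‖ * ‖toLp 2 e‖) ^ 2 := by gcongr
    _ ≤ _ := by linear_combination young

end Matrix

theorem stmt_5_general (n : ℕ) (P Q : Matrix (Fin n) (Fin n) ℝ)
    (p₁ p₂ q₁ q₂ : ℝ) (hp₁ : 0 < p₁) (hp₂ : 0 < p₂) (hq₁ : 0 < q₁) (hq₂ : 0 < q₂)
    (hPlow : (P - p₁ • (1 : Matrix (Fin n) (Fin n) ℝ)).PosSemidef)
    (hQlow : (Q - q₁ • (1 : Matrix (Fin n) (Fin n) ℝ)).PosSemidef)
    (δ : ℝ) (hδ : 0 < δ)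
    (Fc Foc : Matrix (Fin n) (Fin n) ℝ)
    (xk ek xk1 ek1 : Fin n → ℝ)
    (hxupd : xk1 = Fc.mulVec xk + Foc.mulVec ek)
    (hQcontr : ek1 ⬝ᵥ Q.mulVec ek1 ≤ (1 - δ / (2 * q₂)) * (ek ⬝ᵥ Q.mulVec ek))
    (hPcontr : (Fc.mulVec xk) ⬝ᵥ P.mulVec (Fc.mulVec xk)
        ≤ (1 - δ / (2 * p₂)) * (xk ⬝ᵥ P.mulVec xk))
    (N μ : ℝ)
    (hN : N = ‖Foc‖ ^ 2 * ‖P‖ + ‖Fc‖ ^ 2 * ‖Foc‖ ^ 2 * ‖P‖ ^ 2 * (4 * p₂ / (δ * p₁)))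
    (hμ : μ ≥ 2 * q₂ * N / (δ * q₁)) :
    (xk1 ⬝ᵥ P.mulVec xk1 + μ * (ek1 ⬝ᵥ Q.mulVec ek1))
        - (xk ⬝ᵥ P.mulVec xk + μ * (ek ⬝ᵥ Q.mulVec ek))
      ≤ -(δ * p₁ / (4 * p₂)) * ∑ i, xk i ^ 2 := by
  set ε := δ * p₁ / (4 * p₂)
  have hε : 0 < ε := by positivity
  have hNε : N = ‖Foc‖ ^ 2 * ‖P‖ + ‖Fc‖ ^ 2 * ‖Foc‖ ^ 2 * ‖P‖ ^ 2 * ε⁻¹ := by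
    rw [hN, inv_div, mul_comm (4 : ℝ)]
  have hNμ : N ≤ μ * (δ / (2 * q₂) * q₁) :=
    calc N = 2 * q₂ * N / (δ * q₁) * (δ / (2 * q₂) * q₁) := by field_simp
      _ ≤ μ * (δ / (2 * q₂) * q₁) := by gcongr
  have hplant : xk1 ⬝ᵥ P *ᵥ xk1 - xk ⬝ᵥ P *ᵥ xk
      ≤ -ε * ‖toLp 2 xk‖ ^ 2 + N * ‖toLp 2 ek‖ ^ 2 := by
    have hnominal := dotProduct_mulVec_sub_le_of_le_one_sub_mul hPlow (by positivity) hPcontr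
    have hrate : δ / (2 * p₂) * p₁ = 2 * ε := by simp only [ε]; field_simp; ring
    have hcross := mulVec_add_mulVec_dotProduct_le hε P Fc Foc xk ek
    rw [hrate] at hnominal
    rw [← hNε, ← hxupd] at hcross
    linarith
  have hobserver : μ * (ek1 ⬝ᵥ Q *ᵥ ek1 - ek ⬝ᵥ Q *ᵥ ek) ≤ -N * ‖toLp 2 ek‖ ^ 2 := by
    have hdecay := dotProduct_mulVec_sub_le_of_le_one_sub_mul hQlow (by positivity) hQcontr
    have hμ₀ : 0 ≤ μ := le_trans (by rw [hN]; positivity) hμ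
    calc μ * (ek1 ⬝ᵥ Q *ᵥ ek1 - ek ⬝ᵥ Q *ᵥ ek)
        ≤ μ * (-(δ / (2 * q₂) * q₁) * ‖toLp 2 ek‖ ^ 2) := by gcongr
      _ ≤ -N * ‖toLp 2 ek‖ ^ 2 := by
          linarith [mul_le_mul_of_nonneg_right hNμ (sq_nonneg ‖toLp 2 ek‖)]
  rw [← EuclideanSpace.real_norm_sq_eq (toLp 2 xk)]
  linarith

/-- Lyapunov decrease for the coupled discrete-time dynamics: with
`V(e, x̂) = x̂ᵀ P x̂ + μ eᵀ Q e`, contraction of the observer error and of the controller part,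
and `μ ≥ 2 q₂ N(δ)/(δ q₁)`, one gets `V_{k+1} − V_k ≤ −(δ p₁/(4 p₂)) ‖x̂_k‖²`. -/
theorem stmt_5 (n : ℕ) (P Q : Matrix (Fin n) (Fin n) ℝ)
    (hP : P.PosDef) (hQ : Q.PosDef)
    (p₁ p₂ q₁ q₂ : ℝ) (hp₁ : 0 < p₁) (hp₂ : 0 < p₂) (hq₁ : 0 < q₁) (hq₂ : 0 < q₂)
    (hPlow : (P - p₁ • (1 : Matrix (Fin n) (Fin n) ℝ)).PosSemidef)
    (hPhigh : (p₂ • (1 : Matrix (Fin n) (Fin n) ℝ) - P).PosSemidef)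
    (hQlow : (Q - q₁ • (1 : Matrix (Fin n) (Fin n) ℝ)).PosSemidef)
    (hQhigh : (q₂ • (1 : Matrix (Fin n) (Fin n) ℝ) - Q).PosSemidef)
    (δ : ℝ) (hδ : 0 < δ)
    (Fc Fo Foc : Matrix (Fin n) (Fin n) ℝ)
    (xk ek xk1 ek1 : Fin n → ℝ)
    (hxupd : xk1 = Fc.mulVec xk + Foc.mulVec ek)
    (heupd : ek1 = Fo.mulVec ek)
    (hQcontr : ek1 ⬝ᵥ Q.mulVec ek1 ≤ (1 - δ / (2 * q₂)) * (ek ⬝ᵥ Q.mulVec ek))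
    (hPcontr : (Fc.mulVec xk) ⬝ᵥ P.mulVec (Fc.mulVec xk)
        ≤ (1 - δ / (2 * p₂)) * (xk ⬝ᵥ P.mulVec xk))
    (N μ : ℝ)
    (hN : N = ‖Foc‖ ^ 2 * ‖P‖ + ‖Fc‖ ^ 2 * ‖Foc‖ ^ 2 * ‖P‖ ^ 2 * (4 * p₂ / (δ * p₁)))
    (hμ : μ ≥ 2 * q₂ * N / (δ * q₁)) :
    (xk1 ⬝ᵥ P.mulVec xk1 + μ * (ek1 ⬝ᵥ Q.mulVec ek1))
        - (xk ⬝ᵥ P.mulVec xk + μ * (ek ⬝ᵥ Q.mulVec ek))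
      ≤ -(δ * p₁ / (4 * p₂)) * ∑ i, xk i ^ 2 :=
  stmt_5_general n P Q p₁ p₂ q₁ q₂ hp₁ hp₂ hq₁ hq₂ hPlow hQlow δ hδ Fc Foc xk ek xk1 ek1 hxupd
    hQcontr hPcontr N μ hN hμ
end

section
/- Let f : ℝⁿ → ℝⁿ have triangular structure with |f_j(x)| ≤ c·(|x₁| + ... + |x_j|) for all j ∈ {1,...,n} and some c ≥ 0. Let L ≥ 1, 0 < b ≤ 1, and 𝓢 = L^{1−b}·diag(1/L, ..., 1/Lⁿ). Then ‖𝓢 f(x)‖² ≤ n² c² ‖𝓢 x‖² for all x ∈ ℝⁿ. -/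
/-! Since `L ≥ 1`, the weights `L^{1-b-i}` of `𝓢` decrease in `i`, so in the triangular bound
for `(𝓢 f x)_j` each `|x_i|` with `i ≤ j` may be given its own weight, bounding `|(𝓢 f x)_j|`
by `c ‖𝓢 x‖₁`; Cauchy–Schwarz `‖𝓢 x‖₁² ≤ n ‖𝓢 x‖²` and summing over `j` give `n² c²`. -/

open Finset

section TriangularBound

variable {ι : Type*} [Fintype ι]

theorem sum_sq_le_card_sq_mul_sq_mul_sum_sq {c : ℝ} {x y : ι → ℝ}
    (h : ∀ j, |y j| ≤ c * ∑ i, |x i|) :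
    ∑ j, y j ^ 2 ≤ (Fintype.card ι : ℝ) ^ 2 * c ^ 2 * ∑ i, x i ^ 2 := by
  have hcs : (∑ i, |x i|) ^ 2 ≤ Fintype.card ι * ∑ i, x i ^ 2 := by
    simpa only [sq_abs, card_univ] using
      sq_sum_le_card_mul_sum_sq (s := univ) (f := fun i => |x i|)
  have hy : ∀ j, y j ^ 2 ≤ c ^ 2 * (∑ i, |x i|) ^ 2 := fun j => by
    rw [← sq_abs, ← mul_pow]
    exact pow_le_pow_left₀ (abs_nonneg _) (h j) 2
  calc ∑ j, y j ^ 2 ≤ ∑ _j : ι, c ^ 2 * (∑ i, |x i|) ^ 2 := sum_le_sum fun j _ => hy j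
    _ = Fintype.card ι * (c ^ 2 * (∑ i, |x i|) ^ 2) := by
      rw [sum_const, card_univ, nsmul_eq_mul]
    _ ≤ Fintype.card ι * (c ^ 2 * (Fintype.card ι * ∑ i, x i ^ 2)) := by gcongr
    _ = (Fintype.card ι : ℝ) ^ 2 * c ^ 2 * ∑ i, x i ^ 2 := by ring

variable [Preorder ι] [LocallyFiniteOrderBot ι]

theorem abs_mul_le_sum_abs_mul_of_le_sum_Iic {c : ℝ} {w x y : ι → ℝ} (hc : 0 ≤ c)
    (hw₀ : ∀ i, 0 ≤ w i) (hw : Antitone w) {j : ι}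
    (hy : |y j| ≤ c * ∑ i ∈ Iic j, |x i|) :
    |w j * y j| ≤ c * ∑ i, |w i * x i| := by
  calc |w j * y j| ≤ w j * (c * ∑ i ∈ Iic j, |x i|) := by
        rw [abs_mul, abs_of_nonneg (hw₀ j)]
        exact mul_le_mul_of_nonneg_left hy (hw₀ j)
    _ = c * ∑ i ∈ Iic j, w j * |x i| := by rw [mul_left_comm, mul_sum]
    _ ≤ c * ∑ i ∈ Iic j, |w i * x i| := by
        gcongr with i hi
        rw [abs_mul, abs_of_nonneg (hw₀ i)]
        exact mul_le_mul_of_nonneg_right (hw (mem_Iic.mp hi)) (abs_nonneg _)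
    _ ≤ c * ∑ i, |w i * x i| := by
        gcongr
        exact subset_univ _

end TriangularBound

theorem antitone_rpow_sub_succ {L : ℝ} (hL : 1 ≤ L) (a : ℝ) (n : ℕ) :
    Antitone fun i : Fin n => L ^ (a - ((i : ℕ) + 1)) := fun i j hij => by
  apply Real.rpow_le_rpow_of_exponent_le hL
  have : ((i : ℕ) : ℝ) ≤ (j : ℕ) := by exact_mod_cast hij
  linarith

theorem stmt_6_general (n : ℕ) (f : (Fin n → ℝ) → (Fin n → ℝ)) (c : ℝ) (hc : 0 ≤ c)
    (hf : ∀ (x : Fin n → ℝ) (j : Fin n), |f x j| ≤ c * ∑ i ∈ Finset.Iic j, |x i|)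
    (L b : ℝ) (hL : 1 ≤ L)
    (S : (Fin n → ℝ) → (Fin n → ℝ))
    (hS : ∀ (x : Fin n → ℝ) (i : Fin n),
      S x i = L ^ ((1 : ℝ) - b - ((i : ℕ) + 1)) * x i) :
    ∀ x : Fin n → ℝ,
      ∑ i, S (f x) i ^ 2 ≤ (n : ℝ) ^ 2 * c ^ 2 * ∑ i, S x i ^ 2 := by
  intro x
  have hw₀ : ∀ i : Fin n, 0 ≤ L ^ ((1 : ℝ) - b - ((i : ℕ) + 1)) := fun i =>
    Real.rpow_nonneg (zero_le_one.trans hL) _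
  simp only [hS]
  simpa only [Fintype.card_fin] using sum_sq_le_card_sq_mul_sq_mul_sum_sq fun j =>
    abs_mul_le_sum_abs_mul_of_le_sum_Iic hc hw₀ (antitone_rpow_sub_succ hL _ n) (hf x j)

/-- If `f` has the triangular bound `|f_j(x)| ≤ c (|x₁| + … + |x_j|)` then the scaled
vector field satisfies `‖𝓢 f(x)‖² ≤ n² c² ‖𝓢 x‖²` where `𝓢 = L^{1−b} diag(1/L,…,1/Lⁿ)`
and `L ≥ 1`, `0 < b ≤ 1`. -/
theorem stmt_6 (n : ℕ) (f : (Fin n → ℝ) → (Fin n → ℝ)) (c : ℝ) (hc : 0 ≤ c)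
    (hf : ∀ (x : Fin n → ℝ) (j : Fin n), |f x j| ≤ c * ∑ i ∈ Finset.Iic j, |x i|)
    (L b : ℝ) (hL : 1 ≤ L) (hb0 : 0 < b) (hb1 : b ≤ 1)
    (S : (Fin n → ℝ) → (Fin n → ℝ))
    (hS : ∀ (x : Fin n → ℝ) (i : Fin n),
      S x i = L ^ ((1 : ℝ) - b - ((i : ℕ) + 1)) * x i) :
    ∀ x : Fin n → ℝ,
      ∑ i, S (f x) i ^ 2 ≤ (n : ℝ) ^ 2 * c ^ 2 * ∑ i, S x i ^ 2 :=
  stmt_6_general n f c hc hf L b hL S hS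
end
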